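/- arXiv:2109.13408 — 4 statements merged into one kernel-verified Lean document; each statement's English description precedes it below -/
import Mathlib

section
/- Let N ≥ 3 be a natural number. The cubic polynomial p(β) = (2N−1)β³ − (3N−1)β² − (N−1)β + (N−1) has exactly one root in the open interval (0,1). -/
/-!
On `[0, 1]` the cubic falls from `N - 1 > 0` to `-N < 0`, and it is strictly decreasing there:
its derivative is a convex quadratic, so it lies below its chord joining `-(N - 1)` at `0`
to `-N` at `1`. The intermediate value theorem and injectivity give exactly one root.
-/

open Set

theorem StrictAntiOn.existsUnique_zero_Ioo {f : ℝ → ℝ} {a b : ℝ} (hab : a ≤ b)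
    (hcont : ContinuousOn f (Icc a b)) (hanti : StrictAntiOn f (Icc a b))
    (ha : 0 < f a) (hb : f b < 0) : ∃! x, x ∈ Ioo a b ∧ f x = 0 := by
  obtain ⟨x, hx, hfx⟩ := intermediate_value_Ioo' hab hcont ⟨hb, ha⟩
  refine ⟨x, ⟨hx, hfx⟩, fun y ⟨hy, hfy⟩ => ?_⟩
  exact hanti.injOn (Ioo_subset_Icc_self hy) (Ioo_subset_Icc_self hx) (hfy.trans hfx.symm)

def betaCubic (N β : ℝ) : ℝ :=
  (2 * N - 1) * β ^ 3 - (3 * N - 1) * β ^ 2 - (N - 1) * β + (N - 1)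

theorem betaCubic_zero (N : ℝ) : betaCubic N 0 = N - 1 := by
  norm_num [betaCubic]

theorem betaCubic_one (N : ℝ) : betaCubic N 1 = -N := by
  norm_num [betaCubic]
  ring

theorem hasDerivAt_betaCubic (N β : ℝ) :
    HasDerivAt (betaCubic N)
      (3 * (2 * N - 1) * β ^ 2 - 2 * (3 * N - 1) * β - (N - 1)) β := by
  refine (((((hasDerivAt_pow 3 β).const_mul (2 * N - 1)).sub
    ((hasDerivAt_pow 2 β).const_mul (3 * N - 1))).sub
    ((hasDerivAt_id' β).const_mul (N - 1))).add_const (N - 1)).congr_deriv ?_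
  norm_num
  ring

theorem continuous_betaCubic (N : ℝ) : Continuous (betaCubic N) :=
  continuous_iff_continuousAt.2 fun β => (hasDerivAt_betaCubic N β).continuousAt

theorem deriv_betaCubic_neg {N β : ℝ} (hN : 1 < N) (hβ : β ∈ Ioo (0 : ℝ) 1) :
    deriv (betaCubic N) β < 0 := by
  obtain ⟨hβ0, hβ1⟩ := hβ
  rw [(hasDerivAt_betaCubic N β).deriv]
  nlinarith [mul_pos hβ0 (sub_pos.2 hβ1)]

theorem betaCubic_strictAntiOn {N : ℝ} (hN : 1 < N) : StrictAntiOn (betaCubic N) (Icc 0 1) :=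
  strictAntiOn_of_deriv_neg (convex_Icc 0 1)
    (continuous_betaCubic N).continuousOn
    (fun β hβ => deriv_betaCubic_neg hN (by simpa using hβ))

theorem cubic_unique_root_in_unit_interval (N : ℕ) (hN : 3 ≤ N) :
    ∃! β : ℝ, β ∈ Set.Ioo (0 : ℝ) 1 ∧
      (2 * (N : ℝ) - 1) * β ^ 3 - (3 * (N : ℝ) - 1) * β ^ 2
        - ((N : ℝ) - 1) * β + ((N : ℝ) - 1) = 0 := by
  have hN' : (1 : ℝ) < N := by exact_mod_cast (by omega : 1 < N)
  refine (betaCubic_strictAntiOn hN').existsUnique_zero_Ioo (f := betaCubic N) zero_le_one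
    (continuous_betaCubic N).continuousOn ?_ ?_
  · rw [betaCubic_zero]
    linarith
  · rw [betaCubic_one]
    linarith
end

section
/- Let y* ∈ (0, 1/2), φ₁ = (1−y*)²/2, φ₂ = ((N−1)/(2N))(y*)² with N ≥ 3, and set c = 2σ(1−y*)²(1+y*)/(φ₁+φ₂), a = 4σy*(1−y*) for σ > 0. Consider the cubic G₁(μ) = (μ+1)[(μ+1)(a−μ) − c]. If σ < 1/(4y*(1−y*)), then all roots of G₁ have negative real part. -/
/-! The root `μ = -1` is stable, and the other two roots solve `μ² + (1 - a) μ + (c - a) = 0`.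
Both coefficients are positive: `a < 1` is the bound on `σ`, and `a < c` reduces to
`2 y* (φ₁ + φ₂) < 1 - y*²`, which holds because `φ₁ + φ₂ < 1/2` and `y* < 1/2`.
A real quadratic with positive coefficients has its roots in the open left half-plane. -/

theorem re_neg_of_sq_add_mul_add_eq_zero {p q : ℝ} (hp : 0 < p) (hq : 0 < q) {μ : ℂ}
    (h : μ ^ 2 + p * μ + q = 0) : μ.re < 0 := by
  have hre : μ.re ^ 2 - μ.im ^ 2 + p * μ.re + q = 0 := by
    simpa [sq] using congrArg Complex.re h
  have him : μ.im * (2 * μ.re + p) = 0 := by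
    have := congrArg Complex.im h
    simp only [sq, Complex.add_im, Complex.mul_im, Complex.ofReal_re, Complex.ofReal_im,
      Complex.zero_im] at this
    linear_combination this
  rcases mul_eq_zero.mp him with hreal | hvertex
  · rw [hreal] at hre
    nlinarith
  · linarith

-- For `N = 0` the left side is the junk value `-1 / 0 = 0`.
theorem natCast_sub_one_div_two_mul_mem_Icc (N : ℕ) :
    ((N : ℝ) - 1) / (2 * N) ∈ Set.Icc (0 : ℝ) (1 / 2) := by
  rcases N.eq_zero_or_pos with rfl | hN
  · simp
  · have hN1 : (1 : ℝ) ≤ N := by exact_mod_cast hN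
    constructor
    · apply div_nonneg <;> linarith
    · rw [div_le_iff₀ (by positivity)]
      linarith

theorem half_sq_add_mul_sq_pos_and_two_mul_lt {y k : ℝ} (hy : y ∈ Set.Ioo (0 : ℝ) (1 / 2))
    (hk : k ∈ Set.Icc (0 : ℝ) (1 / 2)) :
    0 < (1 - y) ^ 2 / 2 + k * y ^ 2 ∧ 2 * y * ((1 - y) ^ 2 / 2 + k * y ^ 2) < 1 - y ^ 2 := by
  obtain ⟨hy0, hy2⟩ := hy
  obtain ⟨hk0, hk2⟩ := hk
  constructor
  · nlinarith [mul_nonneg hk0 (sq_nonneg y)]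
  · nlinarith [mul_le_mul_of_nonneg_right hk2 (sq_nonneg y), mul_pos hy0 hy0]

theorem four_mul_mul_lt_div {y σ D : ℝ} (hy1 : y < 1) (hσ : 0 < σ) (hD : 0 < D)
    (hyD : 2 * y * D < 1 - y ^ 2) :
    4 * σ * y * (1 - y) < 2 * σ * (1 - y) ^ 2 * (1 + y) / D := by
  rw [lt_div_iff₀ hD]
  have hfactor : 0 < 2 * σ * (1 - y) := by nlinarith
  nlinarith [mul_pos hfactor (sub_pos.mpr hyD)]

theorem G1_roots_stable_general (N : ℕ) (y σ : ℝ)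
    (hy : y ∈ Set.Ioo (0 : ℝ) (1 / 2)) (hσ : 0 < σ)
    (hσlt : σ < 1 / (4 * y * (1 - y))) :
    ∀ μ : ℂ,
      (μ + 1) * ((μ + 1) * ((4 * σ * y * (1 - y) : ℝ) - μ)
          - ((2 * σ * (1 - y) ^ 2 * (1 + y) /
              ((1 - y) ^ 2 / 2 + ((N : ℝ) - 1) / (2 * N) * y ^ 2) : ℝ))) = 0 →
      μ.re < 0 := by
  intro μ hμ
  set a : ℝ := 4 * σ * y * (1 - y)
  set c : ℝ := 2 * σ * (1 - y) ^ 2 * (1 + y) /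
    ((1 - y) ^ 2 / 2 + ((N : ℝ) - 1) / (2 * N) * y ^ 2)
  have hy01 : 0 < 4 * y * (1 - y) := by nlinarith [hy.1, hy.2]
  have ha : a < 1 := by
    have := (lt_div_iff₀ hy01).mp hσlt
    linarith
  have hac : a < c := by
    obtain ⟨hD, hyD⟩ :=
      half_sq_add_mul_sq_pos_and_two_mul_lt hy (natCast_sub_one_div_two_mul_mem_Icc N)
    exact four_mul_mul_lt_div (by linarith [hy.2]) hσ hD hyD
  rcases mul_eq_zero.mp hμ with hroot | hquad
  · rw [eq_neg_of_add_eq_zero_left hroot]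
    norm_num
  · refine re_neg_of_sq_add_mul_add_eq_zero (sub_pos.mpr ha) (sub_pos.mpr hac) ?_
    push_cast
    linear_combination -hquad

theorem G1_roots_stable (N : ℕ) (hN : 3 ≤ N) (y σ : ℝ)
    (hy : y ∈ Set.Ioo (0 : ℝ) (1 / 2)) (hσ : 0 < σ)
    (hσlt : σ < 1 / (4 * y * (1 - y))) :
    ∀ μ : ℂ,
      (μ + 1) * ((μ + 1) * ((4 * σ * y * (1 - y) : ℝ) - μ)
          - ((2 * σ * (1 - y) ^ 2 * (1 + y) /
              ((1 - y) ^ 2 / 2 + ((N : ℝ) - 1) / (2 * N) * y ^ 2) : ℝ))) = 0 →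
      μ.re < 0 :=
  G1_roots_stable_general N y σ hy hσ hσlt
end

section
/- Let y* ∈ (0,1/2), φ₁ = (1−y*)²/2 < 1/4, φ₂ < 1/4, φ₂ > 0. At σ = 1/(4y*(1−y*)), the quantity (4σy*(1−y*) − 1)² + 16σy*(1−y*) − 8σ(1−y*)²(1+y*)/(φ₁+φ₂) is negative; hence the non-(−1) roots of G₁(μ) = (μ+1)[(μ+1)(4σy*(1−y*)−μ) − 2σ(1−y*)²(1+y*)/(φ₁+φ₂)] are a complex conjugate pair with zero real part. -/
/-!
At the critical value `σ = 1 / (4 y (1 - y))` the trace term `4 σ y (1 - y)` equals `1`, so with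
`c = 2 σ (1 - y)² (1 + y) / (φ₁ + φ₂)` the cubic factor becomes `-(z + 1) (z² + (c - 1))` and the
discriminant-type quantity becomes `4 (1 - c)`. Both claims therefore reduce to `c > 1`, that is to
`φ₁ + φ₂ < (1 - y²) / (2 y)`, which holds because `φ₁ + φ₂ < 1/2 < (1 - y²) / (2 y)` for `y < 1/2`.
-/

open Complex ComplexConjugate

/-- The cubic factor `G₁(μ)` of the characteristic polynomial, with trace term `τ`. -/
def cubicFactor (τ c z : ℂ) : ℂ := (z + 1) * ((z + 1) * (τ - z) - c)

lemma sq_add_ofReal_eq_zero_iff {a : ℝ} (ha : 0 ≤ a) (z : ℂ) :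
    z ^ 2 + a = 0 ↔ z = I * √a ∨ z = conj (I * √a) := by
  have hsq : (I * √a) ^ 2 = -a := by
    rw [mul_pow, I_sq, ← ofReal_pow, Real.sq_sqrt ha]
    ring
  have hconj : conj (I * √a) = -(I * √a) := by
    rw [map_mul, conj_I, conj_ofReal, neg_mul]
  rw [hconj, ← sq_eq_sq_iff_eq_or_eq_neg, hsq, eq_neg_iff_add_eq_zero]

lemma cubicFactor_one_eq_zero_iff {c : ℝ} (hc : 1 ≤ c) (z : ℂ) :
    cubicFactor 1 c z = 0 ↔ z = -1 ∨ z = I * √(c - 1) ∨ z = conj (I * √(c - 1)) := by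
  have hfactor : cubicFactor 1 c z = -((z + 1) * (z ^ 2 + ((c - 1 : ℝ) : ℂ))) := by
    unfold cubicFactor
    push_cast
    ring
  rw [hfactor, neg_eq_zero, mul_eq_zero, add_eq_zero_iff_eq_neg,
    sq_add_ofReal_eq_zero_iff (sub_nonneg.mpr hc)]

lemma half_lt_one_sub_sq_div_two_mul {y : ℝ} (hy0 : 0 < y) (hy1 : y < 1 / 2) :
    1 / 2 < (1 - y ^ 2) / (2 * y) := by
  rw [lt_div_iff₀ (by positivity)]
  nlinarith

theorem critical_sigma_pure_imaginary_pair (y φ1 φ2 : ℝ)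
    (hy : y ∈ Set.Ioo (0 : ℝ) (1 / 2))
    (hφ1 : φ1 = (1 - y) ^ 2 / 2) (hφ1lt : φ1 < 1 / 4)
    (hφ2pos : 0 < φ2) (hφ2lt : φ2 < 1 / 4)
    (σ : ℝ) (hσ : σ = 1 / (4 * y * (1 - y))) :
    (4 * σ * y * (1 - y) - 1) ^ 2 + 16 * σ * y * (1 - y)
        - 8 * σ * (1 - y) ^ 2 * (1 + y) / (φ1 + φ2) < 0 ∧
    ∃ μ : ℂ, μ.re = 0 ∧ μ.im ≠ 0 ∧
      ∀ z : ℂ,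
        (z + 1) * ((z + 1) * ((4 * σ * y * (1 - y) : ℝ) - z)
            - ((2 * σ * (1 - y) ^ 2 * (1 + y) / (φ1 + φ2) : ℝ))) = 0 ↔
        z = -1 ∨ z = μ ∨ z = (starRingEnd ℂ) μ := by
  obtain ⟨hy0, hy1⟩ := hy
  have hy1' : 0 < 1 - y := by linarith
  have htrace : 4 * σ * y * (1 - y) = 1 := by
    rw [hσ]
    field_simp
  have hφ : 0 < φ1 + φ2 := by
    have : 0 < φ1 := by rw [hφ1]; positivity
    linarith
  set c := 2 * σ * (1 - y) ^ 2 * (1 + y) / (φ1 + φ2) with hc_def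
  have hc : 1 < c := by
    have hnum : 2 * σ * (1 - y) ^ 2 * (1 + y) = (1 - y ^ 2) / (2 * y) := by
      rw [hσ]
      field_simp
      ring
    rw [hc_def, one_lt_div hφ, hnum]
    linarith [half_lt_one_sub_sq_div_two_mul hy0 hy1]
  refine ⟨?_, I * √(c - 1), by simp, by simpa using (Real.sqrt_pos.mpr (sub_pos.mpr hc)).ne', fun z => ?_⟩
  · have hquantity : (4 * σ * y * (1 - y) - 1) ^ 2 + 16 * σ * y * (1 - y)
        - 8 * σ * (1 - y) ^ 2 * (1 + y) / (φ1 + φ2) = 4 * (1 - c) := by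
      rw [hc_def]
      linear_combination (4 * σ * y * (1 - y) + 3) * htrace
    linarith
  · rw [htrace, ofReal_one]
    exact cubicFactor_one_eq_zero_iff hc.le z
end

section
/- Let N ≥ 3, y* ∈ (0,1) the root of (2N−1)β³−(3N−1)β²−(N−1)β+(N−1)=0, φ₁ = (1−y*)²/2, φ₂ = ((N−1)/(2N))(y*)². Then φ₁ < 1/4 and φ₂ < 1/4. -/
/-!
Write the cubic as `n (2β - 1)(β² - β - 1) - (1 - β)²(1 + β)`. On `(0, 1)` the second term is
positive and `β² - β - 1 < 0`, so a root `y` with `n ≥ 0` forces `y < 1/2`, which gives the bound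
on `φ₂`. For `φ₁`, `n ≥ 2` turns the root equation into `3y³ - 5y² - y + 1 ≤ 0`, and this cubic is
positive as soon as `(1 - y)² ≥ 1/2`.
-/

open Set

section CubicRoot

variable {n y : ℝ}

theorem cubic_eq_factored (n y : ℝ) :
    (2 * n - 1) * y ^ 3 - (3 * n - 1) * y ^ 2 - (n - 1) * y + (n - 1)
      = n * ((2 * y - 1) * (y ^ 2 - y - 1)) - (1 - y) ^ 2 * (1 + y) := by
  ring

theorem factor_pos_of_root (hn : 0 ≤ n) (hy : y ∈ Ioo (0 : ℝ) 1)
    (hroot : (2 * n - 1) * y ^ 3 - (3 * n - 1) * y ^ 2 - (n - 1) * y + (n - 1) = 0) :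
    0 < (2 * y - 1) * (y ^ 2 - y - 1) := by
  obtain ⟨hy0, hy1⟩ := hy
  rw [cubic_eq_factored, sub_eq_zero] at hroot
  have hrhs : 0 < (1 - y) ^ 2 * (1 + y) := by
    have : 0 < 1 - y := by linarith
    positivity
  exact pos_of_mul_pos_right (hroot ▸ hrhs) hn

theorem lt_half_of_root (hn : 0 ≤ n) (hy : y ∈ Ioo (0 : ℝ) 1)
    (hroot : (2 * n - 1) * y ^ 3 - (3 * n - 1) * y ^ 2 - (n - 1) * y + (n - 1) = 0) :
    y < 1 / 2 := by
  have hp := factor_pos_of_root hn hy hroot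
  have hneg : y ^ 2 - y - 1 < 0 := by nlinarith [hy.1, hy.2]
  linarith [neg_of_mul_pos_left hp hneg.le]

theorem one_sub_sq_lt_half_of_root (hn : 2 ≤ n) (hy : y ∈ Ioo (0 : ℝ) 1)
    (hroot : (2 * n - 1) * y ^ 3 - (3 * n - 1) * y ^ 2 - (n - 1) * y + (n - 1) = 0) :
    (1 - y) ^ 2 < 1 / 2 := by
  have hp := factor_pos_of_root (by linarith) hy hroot
  rw [cubic_eq_factored, sub_eq_zero] at hroot
  have hle : 3 * y ^ 3 - 5 * y ^ 2 - y + 1 ≤ 0 := by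
    nlinarith [mul_le_mul_of_nonneg_right hn hp.le]
  by_contra! hge
  have hcubic : 3 * y ^ 3 - 5 * y ^ 2 - y + 1
      = ((1 - y) ^ 2 - 1 / 2) * (3 * y + 1) + (1 - y) / 2 := by ring
  nlinarith [mul_nonneg (sub_nonneg.2 hge) (by linarith [hy.1] : (0 : ℝ) ≤ 3 * y + 1), hy.2]

end CubicRoot

theorem task_values_lt_quarter (N : ℕ) (hN : 3 ≤ N) (y : ℝ)
    (hy : y ∈ Set.Ioo (0 : ℝ) 1)
    (hroot : (2 * (N : ℝ) - 1) * y ^ 3 - (3 * (N : ℝ) - 1) * y ^ 2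
      - ((N : ℝ) - 1) * y + ((N : ℝ) - 1) = 0) :
    (1 - y) ^ 2 / 2 < 1 / 4 ∧ ((N : ℝ) - 1) / (2 * N) * y ^ 2 < 1 / 4 := by
  have hN2 : (2 : ℝ) ≤ N := by exact_mod_cast (by omega : 2 ≤ N)
  have hhalf : y < 1 / 2 := lt_half_of_root (by positivity) hy hroot
  refine ⟨by linarith [one_sub_sq_lt_half_of_root hN2 hy hroot], ?_⟩
  have hcoef : ((N : ℝ) - 1) / (2 * N) < 1 / 2 := by
    rw [div_lt_iff₀ (by positivity)]
    linarith
  have hsq : y ^ 2 < 1 / 4 := by nlinarith [hy.1]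
  calc ((N : ℝ) - 1) / (2 * N) * y ^ 2 ≤ 1 / 2 * y ^ 2 := by gcongr
    _ < 1 / 4 := by linarith
end
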